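/- arXiv:1110.4697 — 3 statements merged into one kernel-verified Lean document; each statement's English description precedes it below -/
import Mathlib

section
/- Let S ⊂ {0,1}^N be a finite monotone set of schedules and let D ∈ ℝ_+^N satisfy ρ(D) ≥ N+1, where ρ(D) is the optimal value of the static planning problem for D. Then there exists a schedule σ* ∈ S with σ* ≤ D componentwise and ρ(D − σ*) ≤ ρ(D) − 1. -/
/-!
Take a near-optimal fractional cover `α` of `D`, of total weight `T ≥ N + 1`. Because `S` is
monotone and `D ≥ 0`, the point `D / T`, which is dominated by the centre of mass of `α`, still
lies in the convex hull of `S`. Carathéodory writes it as a convex combination of at most `N + 1`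
schedules, one of which, `σ*`, has weight at least `1 / (N + 1)`, i.e. multiplicity at least `1`
in the exact cover `D = T • (D / T)`. Removing one copy of `σ*` covers `D - σ*` with total
`T - 1`, and `σ* ≤ D` because the cover is exact. Since `S` is finite, the same `σ*` works for
covers with `T` arbitrarily close to `ρ(D)`.
-/

/-- The load `ρ(x)` induced by a nonnegative vector `x`: the infimum of `∑ α_σ` over
nonnegative coefficients `α` with `x ≤ ∑ α_σ σ` componentwise. -/
noncomputable def schedRho (N : ℕ) (S : Finset (Fin N → ℝ)) (x : Fin N → ℝ) : ℝ :=
  sInf {c : ℝ | ∃ α : (Fin N → ℝ) → ℝ, (∀ σ, 0 ≤ α σ) ∧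
    (∀ i, x i ≤ ∑ σ ∈ S, α σ * σ i) ∧ c = ∑ σ ∈ S, α σ}

open Finset Function Module

theorem Finset.exists_le_of_forall_pos_exists_le_add {α : Type*} (s : Finset α) (P : α → Prop)
    (f : α → ℝ) (a : ℝ) (h : ∀ ε > 0, ∃ x ∈ s, P x ∧ f x ≤ a + ε) :
    ∃ x ∈ s, P x ∧ f x ≤ a := by
  classical
  obtain ⟨x₁, hx₁, hPx₁, -⟩ := h 1 one_pos
  obtain ⟨x, hx, hmin⟩ := (s.filter P).exists_min_image f ⟨x₁, mem_filter.2 ⟨hx₁, hPx₁⟩⟩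
  obtain ⟨hxs, hPx⟩ := mem_filter.1 hx
  refine ⟨x, hxs, hPx, le_of_forall_pos_le_add fun ε hε => ?_⟩
  obtain ⟨y, hys, hPy, hy⟩ := h ε hε
  exact (hmin y (mem_filter.2 ⟨hys, hPy⟩)).trans hy

theorem exists_weight_ge_of_mem_convexHull {E : Type*} [AddCommGroup E] [Module ℝ E]
    [FiniteDimensional ℝ E] {s : Set E} {y : E} (hy : y ∈ convexHull ℝ s) :
    ∃ (t : Finset E) (w : E → ℝ), ↑t ⊆ s ∧ (∀ x ∈ t, 0 ≤ w x) ∧ ∑ x ∈ t, w x = 1 ∧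
      ∑ x ∈ t, w x • x = y ∧ ∃ x ∈ t, ((finrank ℝ E : ℝ) + 1)⁻¹ ≤ w x := by
  rw [convexHull_eq_union] at hy
  simp only [Set.mem_iUnion] at hy
  obtain ⟨t, hts, hind, hyt⟩ := hy
  rw [Finset.convexHull_eq] at hyt
  obtain ⟨w, hw0, hw1, rfl⟩ := hyt
  have hcard : (#t : ℝ) ≤ finrank ℝ E + 1 := by
    have h₁ := hind.card_le_finrank_succ
    have h₂ := Submodule.finrank_le (vectorSpan ℝ (Set.range ((↑) : t → E)))
    rw [Fintype.card_coe] at h₁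
    exact_mod_cast h₁.trans (Nat.add_le_add_right h₂ 1)
  have hne : t.Nonempty := nonempty_of_sum_ne_zero (hw1 ▸ one_ne_zero)
  obtain ⟨x, hx, hwx⟩ := exists_le_of_sum_le hne (f := fun _ => ((finrank ℝ E : ℝ) + 1)⁻¹)
    (g := w) (by
      rw [hw1, sum_const, nsmul_eq_mul, ← div_eq_mul_inv]
      exact div_le_one_of_le₀ hcard (by positivity))
  exact ⟨t, w, hts, hw0, hw1, (centerMass_eq_of_sum_1 _ _ hw1).symm, x, hx, hwx⟩

section DownwardClosed

variable {ι : Type*} [DecidableEq ι] {s : Set (ι → ℝ)}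

theorem update_zero_mem_convexHull (hs : ∀ σ ∈ s, ∀ i, update σ i 0 ∈ s) {z : ι → ℝ}
    (hz : z ∈ convexHull ℝ s) (i : ι) : update z i 0 ∈ convexHull ℝ s := by
  have hlin : IsLinearMap ℝ fun x : ι → ℝ => update x i 0 :=
    ⟨fun x y => by rw [← update_add, add_zero], fun c x => by rw [← update_smul, smul_zero]⟩
  have hmem := hlin.image_convexHull s ▸ Set.mem_image_of_mem _ hz
  exact convexHull_mono (Set.image_subset_iff.2 fun σ hσ => hs σ hσ i) hmem

theorem update_mem_convexHull (hs : ∀ σ ∈ s, ∀ i, update σ i 0 ∈ s) {z : ι → ℝ}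
    (hz : z ∈ convexHull ℝ s) (i : ι) {c : ℝ} (hc₀ : 0 ≤ c) (hc : c ≤ z i) :
    update z i c ∈ convexHull ℝ s := by
  have hseg : update z i c ∈ segment ℝ (update z i 0) (update z i (z i)) := by
    rw [← Pi.image_update_segment, segment_eq_Icc (hc₀.trans hc)]
    exact Set.mem_image_of_mem _ ⟨hc₀, hc⟩
  rw [update_eq_self] at hseg
  exact (convex_convexHull ℝ s).segment_subset (update_zero_mem_convexHull hs hz i) hz hseg

theorem mem_convexHull_of_le [Fintype ι] (hs : ∀ σ ∈ s, ∀ i, update σ i 0 ∈ s) {y z : ι → ℝ}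
    (hz : z ∈ convexHull ℝ s) (hy₀ : 0 ≤ y) (hyz : y ≤ z) : y ∈ convexHull ℝ s := by
  suffices ∀ (u : Finset ι) (z : ι → ℝ), z ∈ convexHull ℝ s → y ≤ z → (∀ i ∉ u, y i = z i) →
      y ∈ convexHull ℝ s from this univ z hz hyz fun i hi => absurd (mem_univ i) hi
  intro u
  induction u using Finset.induction_on with
  | empty =>
    intro z hz _ hyz
    rwa [funext fun i => hyz i (notMem_empty i)]
  | insert a u _ ih =>
    intro z hz hyz hyz'
    refine ih (update z a (y a)) (update_mem_convexHull hs hz a (hy₀ a) (hyz a))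
      (fun i => ?_) fun i hi => ?_
    · rcases eq_or_ne i a with rfl | hia
      · simp
      · simpa [hia] using hyz i
    · rcases eq_or_ne i a with rfl | hia
      · simp
      · simpa [hia] using hyz' i (by simp [hia, hi])

end DownwardClosed

section Schedules

variable {N : ℕ} {S : Finset (Fin N → ℝ)}

theorem update_zero_mem_of_monotone (hS01 : ∀ σ ∈ S, ∀ i, σ i = 0 ∨ σ i = 1)
    (hmono : ∀ σ ∈ S, ∀ σ' : Fin N → ℝ,
      (∀ i, σ' i = 0 ∨ σ' i = 1) → (∀ i, σ' i ≤ σ i) → σ' ∈ S)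
    {σ : Fin N → ℝ} (hσ : σ ∈ S) (i : Fin N) : update σ i 0 ∈ S := by
  refine hmono σ hσ _ (fun j => ?_) fun j => ?_ <;> rcases eq_or_ne j i with rfl | hji
  · simp
  · simpa [hji] using hS01 σ hσ j
  · rcases hS01 σ hσ j with h | h <;> simp [h]
  · simp [hji]

theorem schedRho_le_sum {x : Fin N → ℝ} {α : (Fin N → ℝ) → ℝ} (hα : ∀ σ, 0 ≤ α σ)
    (hx : ∀ i, x i ≤ ∑ σ ∈ S, α σ * σ i) : schedRho N S x ≤ ∑ σ ∈ S, α σ :=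
  csInf_le ⟨0, by rintro c ⟨β, hβ, -, rfl⟩; exact sum_nonneg fun σ _ => hβ σ⟩ ⟨α, hα, hx, rfl⟩

theorem schedRho_le_of_eq_sum {t : Finset (Fin N → ℝ)} (ht : t ⊆ S) {β : (Fin N → ℝ) → ℝ}
    (hβ : ∀ σ ∈ t, 0 ≤ β σ) {x : Fin N → ℝ} (hx : x = ∑ σ ∈ t, β σ • σ) :
    schedRho N S x ≤ ∑ σ ∈ t, β σ := by
  classical
  have hsum (f : (Fin N → ℝ) → ℝ) :
      ∑ σ ∈ S, (if σ ∈ t then β σ else 0) * f σ = ∑ σ ∈ t, β σ * f σ := by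
    simp_rw [ite_mul, zero_mul]
    rw [sum_ite_mem, inter_eq_right.2 ht]
  calc schedRho N S x ≤ ∑ σ ∈ S, if σ ∈ t then β σ else 0 := by
        refine schedRho_le_sum (fun σ => ?_) fun i => ?_
        · split_ifs with h
          exacts [hβ σ h, le_rfl]
        · refine le_of_eq ?_
          calc x i = ∑ σ ∈ t, β σ * σ i := by simp [hx, Finset.sum_apply]
            _ = _ := (hsum fun σ => σ i).symm
    _ = ∑ σ ∈ t, β σ := by simpa using hsum fun _ => 1

/-- The hypothesis `0 < schedRho` rules out an infeasible `x`, for which `sInf ∅ = 0`. -/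
theorem exists_cover_sum_lt {x : Fin N → ℝ} (hx : 0 < schedRho N S x) {ε : ℝ} (hε : 0 < ε) :
    ∃ α : (Fin N → ℝ) → ℝ, (∀ σ, 0 ≤ α σ) ∧ (∀ i, x i ≤ ∑ σ ∈ S, α σ * σ i) ∧
      ∑ σ ∈ S, α σ < schedRho N S x + ε := by
  have hne : {c : ℝ | ∃ α : (Fin N → ℝ) → ℝ, (∀ σ, 0 ≤ α σ) ∧
      (∀ i, x i ≤ ∑ σ ∈ S, α σ * σ i) ∧ c = ∑ σ ∈ S, α σ}.Nonempty := by
    by_contra h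
    rw [Set.not_nonempty_iff_eq_empty] at h
    simp [schedRho, h] at hx
  obtain ⟨_, ⟨α, hα, hcov, rfl⟩, hlt⟩ := Real.lt_sInf_add_pos hne hε
  exact ⟨α, hα, hcov, hlt⟩

theorem exists_mem_le_schedRho_sub_le (hS01 : ∀ σ ∈ S, ∀ i, σ i = 0 ∨ σ i = 1)
    (hmono : ∀ σ ∈ S, ∀ σ' : Fin N → ℝ,
      (∀ i, σ' i = 0 ∨ σ' i = 1) → (∀ i, σ' i ≤ σ i) → σ' ∈ S)
    {D : Fin N → ℝ} (hD : ∀ i, 0 ≤ D i) {α : (Fin N → ℝ) → ℝ} (hα : ∀ σ, 0 ≤ α σ)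
    (hcov : ∀ i, D i ≤ ∑ σ ∈ S, α σ * σ i) (hT : (N : ℝ) + 1 ≤ ∑ σ ∈ S, α σ) :
    ∃ σ ∈ S, (∀ i, σ i ≤ D i) ∧ schedRho N S (D - σ) ≤ ∑ σ ∈ S, α σ - 1 := by
  set T := ∑ σ ∈ S, α σ
  have hT₀ : 0 < T := lt_of_lt_of_le (by positivity) hT
  have hz : T⁻¹ • ∑ σ ∈ S, α σ • σ ∈ convexHull ℝ (S : Set (Fin N → ℝ)) :=
    centerMass_mem_convexHull S (fun σ _ => hα σ) hT₀ fun σ hσ => hσ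
  have hy : T⁻¹ • D ∈ convexHull ℝ (S : Set (Fin N → ℝ)) := by
    refine mem_convexHull_of_le (fun σ hσ i => update_zero_mem_of_monotone hS01 hmono hσ i) hz
      (smul_nonneg (inv_nonneg.2 hT₀.le) hD) (smul_le_smul_of_nonneg_left (fun i => ?_)
      (inv_nonneg.2 hT₀.le))
    simpa [Finset.sum_apply] using hcov i
  obtain ⟨t, w, htS, hw₀, hw₁, hwy, σ, hσt, hwσ⟩ := exists_weight_ge_of_mem_convexHull hy
  rw [Module.finrank_fin_fun] at hwσ
  have htS' : t ⊆ S := coe_subset.1 htS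
  have hTw : 1 ≤ T * w σ := by
    calc (1 : ℝ) = ((N : ℝ) + 1) * ((N : ℝ) + 1)⁻¹ := (mul_inv_cancel₀ (by positivity)).symm
      _ ≤ T * w σ := mul_le_mul hT hwσ (by positivity) hT₀.le
  have hD_eq : D = ∑ τ ∈ t, (T * w τ) • τ := by
    simp_rw [mul_smul, ← smul_sum, hwy, smul_inv_smul₀ hT₀.ne']
  have ht₀ : ∀ τ ∈ t, ∀ i, 0 ≤ τ i := fun τ hτ i => by
    rcases hS01 τ (htS' hτ) i with h | h <;> simp [h]
  refine ⟨σ, htS' hσt, fun i => ?_, ?_⟩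
  · calc σ i ≤ T * w σ * σ i := le_mul_of_one_le_left (ht₀ σ hσt i) hTw
      _ ≤ ∑ τ ∈ t, T * w τ * τ i :=
        single_le_sum (f := fun τ => T * w τ * τ i)
          (fun τ hτ => mul_nonneg (mul_nonneg hT₀.le (hw₀ τ hτ)) (ht₀ τ hτ i)) hσt
      _ = D i := by simp [hD_eq, Finset.sum_apply]
  -- remove one copy of `σ` from the exact cover `hD_eq`
  calc schedRho N S (D - σ) ≤ ∑ τ ∈ t, (T * w τ - if τ = σ then 1 else 0) := by
        refine schedRho_le_of_eq_sum htS' (fun τ hτ => ?_) ?_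
        · split_ifs with h
          · subst h; linarith
          · simpa using mul_nonneg hT₀.le (hw₀ τ hτ)
        · simp [sub_smul, sum_sub_distrib, hD_eq, hσt]
    _ = T - 1 := by simp [sum_sub_distrib, ← mul_sum, hw₁, hσt]

end Schedules

theorem stmt3_general (N : ℕ) (S : Finset (Fin N → ℝ))
    (hS01 : ∀ σ ∈ S, ∀ i, σ i = 0 ∨ σ i = 1)
    (hmono : ∀ σ ∈ S, ∀ σ' : Fin N → ℝ,
      (∀ i, σ' i = 0 ∨ σ' i = 1) → (∀ i, σ' i ≤ σ i) → σ' ∈ S)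
    (D : Fin N → ℝ) (hD : ∀ i, 0 ≤ D i)
    (hbig : (N : ℝ) + 1 ≤ schedRho N S D) :
    ∃ σ ∈ S, (∀ i, σ i ≤ D i) ∧ schedRho N S (D - σ) ≤ schedRho N S D - 1 := by
  refine S.exists_le_of_forall_pos_exists_le_add _ _ _ fun ε hε => ?_
  obtain ⟨α, hα, hcov, hlt⟩ := exists_cover_sum_lt (lt_of_lt_of_le (by positivity) hbig) hε
  obtain ⟨σ, hσ, hσD, hρ⟩ := exists_mem_le_schedRho_sub_le hS01 hmono hD hα hcov
    (hbig.trans (schedRho_le_sum hα hcov))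
  exact ⟨σ, hσ, hσD, by linarith⟩

theorem stmt3 (N : ℕ) (S : Finset (Fin N → ℝ))
    (hS01 : ∀ σ ∈ S, ∀ i, σ i = 0 ∨ σ i = 1)
    (hmono : ∀ σ ∈ S, ∀ σ' : Fin N → ℝ,
      (∀ i, σ' i = 0 ∨ σ' i = 1) → (∀ i, σ' i ≤ σ i) → σ' ∈ S)
    (hunit : ∀ i : Fin N, (fun k => if k = i then (1 : ℝ) else 0) ∈ S)
    (D : Fin N → ℝ) (hD : ∀ i, 0 ≤ D i)
    (hbig : (N : ℝ) + 1 ≤ schedRho N S D) :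
    ∃ σ ∈ S, (∀ i, σ i ≤ D i) ∧ schedRho N S (D - σ) ≤ schedRho N S D - 1 :=
  stmt3_general N S hS01 hmono D hD hbig
end

section
/- Consider a single-server discrete-time queue with workload recursion W(τ+1) = max(W(τ) − 1, 0) + a(τ), where a(τ) are i.i.d. nonnegative random variables with E[a(0)] < 1 and log-MGF log f(θ) = log E[e^{θ a(0)}] finite for all θ in a neighborhood of 0. Suppose there exists θ* > 0 with log f(θ*) = θ* and log f(θ) < θ for θ ∈ (0, θ*). Then for any stationary distribution of W, the tail satisfies lim_{L→∞} (1/L) log P(W(∞) ≥ L) = −θ*. -/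
/-!
Write `G L = ν [L, ∞)` and `f θ = E exp (θ a)`. Stationarity sandwiches `G` between
`∫ G (L + 1 - a) dμ(a)` and `μ [L, ∞) + ∫ G (L + 1 - a) dμ(a)`.

Upper bound: for `0 < θ < θ*` we have `ρ = e^{-θ} f θ < 1`. Iterating the right inequality,
starting from the crude bound `G L ≤ G c + e^{θ (c - L)}`, gives
`G L ≤ G c + f θ / (1 - ρ) e^{-θ L}`, and `c → ∞` gives `G L = O(e^{-θ L})`.

Lower bound: the left inequality and `G = 1` on `(-∞, 0]` (as `a ≥ 0`) give `G L ≥ P(S_n ≥ L)` for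
the random walk `S_n = ∑ (a_i - 1)`, and `(n, L) ↦ P(S_n ≥ L)` is supermultiplicative. If
`P(S_n ≥ L) ≤ e^{-β L}` held for all `n` and `L ≥ 1`, with `β > θ*`, then
`E exp (θ S_n) = (e^{-θ} f θ)^n` would stay bounded for `θ* < θ < β`, so `f θ ≤ e^θ`; but `log f` is
convex (Hölder), `f (θ*/2) < e^{θ*/2}` and `f θ* = e^{θ*}`, so `f θ > e^θ`. Hence some
`P(S_{n₀} ≥ L₀) ≥ e^{-β L₀}`, and supermultiplicativity gives `G L ≥ e^{-β (L + L₀)}`.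
-/

open MeasureTheory Set Filter Real Topology
open scoped ENNReal

noncomputable section

namespace Lindley

def step (p : ℝ × ℝ) : ℝ := max (p.1 - 1) 0 + p.2

lemma measurable_step : Measurable step := by
  unfold step; fun_prop

/-- The moment generating function as an extended real: it is `∞` where `exp (θ x)` is not
integrable. -/
def emgf (μ : Measure ℝ) (θ : ℝ) : ℝ≥0∞ := ∫⁻ x, ENNReal.ofReal (exp (θ * x)) ∂μ

lemma tendsto_measure_Ici_atTop (ν : Measure ℝ) [IsFiniteMeasure ν] :
    Tendsto (fun c => ν (Ici c)) atTop (𝓝 0) := by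
  have hempty : ⋂ c : ℝ, Ici c = ∅ :=
    eq_empty_of_forall_notMem fun x hx => by linarith [mem_Ici.1 (mem_iInter.1 hx (x + 1))]
  simpa [hempty, Function.comp_def] using tendsto_measure_iInter_atTop (μ := ν)
    (fun c => measurableSet_Ici.nullMeasurableSet) (fun _ _ h => Ici_subset_Ici.2 h)
    ⟨0, measure_ne_top _ _⟩

lemma le_one_of_forall_pow_le {x C : ℝ≥0∞} (hC : C ≠ ⊤) (h : ∀ n : ℕ, x ^ n ≤ C) : x ≤ 1 := by
  by_contra! hx
  obtain ⟨n, hn⟩ := ((ENNReal.tendsto_pow_atTop_nhds_top_iff.2 hx).eventually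
    (lt_mem_nhds hC.lt_top)).exists
  exact (h n).not_gt hn

section Stationary

variable {μ ν : Measure ℝ} [IsProbabilityMeasure μ] [IsProbabilityMeasure ν]

lemma measure_Ici_eq_lintegral (hstat : ν = Measure.map step (ν.prod μ)) (L : ℝ) :
    ν (Ici L) = ∫⁻ a, ν {w | L ≤ max (w - 1) 0 + a} ∂μ := by
  conv_lhs => rw [hstat]
  rw [Measure.map_apply measurable_step measurableSet_Ici,
    Measure.prod_apply_symm (measurable_step measurableSet_Ici)]
  rfl

lemma measure_Ici_le (hstat : ν = Measure.map step (ν.prod μ)) (L : ℝ) :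
    ν (Ici L) ≤ μ (Ici L) + ∫⁻ a, ν (Ici (L + 1 - a)) ∂μ := by
  rw [measure_Ici_eq_lintegral hstat, ← lintegral_indicator_one measurableSet_Ici,
    ← lintegral_add_left (measurable_one.indicator measurableSet_Ici)]
  refine lintegral_mono fun a => ?_
  by_cases ha : L ≤ a
  · simpa [indicator_of_mem (show a ∈ Ici L from ha)] using le_add_right prob_le_one
  · rw [indicator_of_notMem (show a ∉ Ici L from ha), zero_add]
    refine measure_mono fun w (hw : L ≤ max (w - 1) 0 + a) => ?_
    rcases le_max_iff.1 (show L - a ≤ max (w - 1) 0 by linarith) with h | h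
    · exact show L + 1 - a ≤ w by linarith
    · exact absurd ha (by linarith)

lemma lintegral_measure_Ici_le (hstat : ν = Measure.map step (ν.prod μ)) (L : ℝ) :
    ∫⁻ a, ν (Ici (L + 1 - a)) ∂μ ≤ ν (Ici L) := by
  rw [measure_Ici_eq_lintegral hstat]
  refine lintegral_mono fun a => measure_mono fun w (hw : L + 1 - a ≤ w) => ?_
  show L ≤ max (w - 1) 0 + a
  linarith [le_max_left (w - 1) 0]

lemma measure_Ici_of_nonpos (hnn : μ {x | x < 0} = 0) (hstat : ν = Measure.map step (ν.prod μ))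
    {L : ℝ} (hL : L ≤ 0) : ν (Ici L) = 1 := by
  have hfull : ∀ᵐ a ∂μ, ν {w | L ≤ max (w - 1) 0 + a} = 1 := by
    filter_upwards [measure_eq_zero_iff_ae_notMem.1 hnn] with a (ha : ¬a < 0)
    have huniv : {w | L ≤ max (w - 1) 0 + a} = univ :=
      eq_univ_of_forall fun w => show L ≤ max (w - 1) 0 + a by linarith [le_max_right (w - 1) 0]
    rw [huniv, measure_univ]
  rw [measure_Ici_eq_lintegral hstat, lintegral_congr_ae hfull, lintegral_one, measure_univ]

end Stationary

section MGF

variable {μ : Measure ℝ}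

lemma emgf_eq_ofReal_integral {θ : ℝ} (hi : Integrable (fun x => exp (θ * x)) μ) :
    emgf μ θ = ENNReal.ofReal (∫ x, exp (θ * x) ∂μ) :=
  (ofReal_integral_eq_lintegral_ofReal hi (ae_of_all _ fun _ => (exp_pos _).le)).symm

lemma ofReal_exp_rpow (x t : ℝ) : ENNReal.ofReal (exp x) ^ t = ENNReal.ofReal (exp (x * t)) := by
  rw [ENNReal.ofReal_rpow_of_pos (exp_pos x), ← exp_mul]

lemma measure_Ici_le_emgf {θ : ℝ} (hθ : 0 ≤ θ) (L : ℝ) :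
    μ (Ici L) ≤ ENNReal.ofReal (exp (-(θ * L))) * emgf μ θ := by
  calc μ (Ici L) = ∫⁻ x, (Ici L).indicator 1 x ∂μ :=
        (lintegral_indicator_one measurableSet_Ici).symm
    _ ≤ ∫⁻ x, ENNReal.ofReal (exp (-(θ * L))) * ENNReal.ofReal (exp (θ * x)) ∂μ := by
      refine lintegral_mono fun x => ?_
      by_cases hx : x ∈ Ici L
      · rw [indicator_of_mem hx, Pi.one_apply, ← ENNReal.ofReal_mul (exp_pos _).le, ← exp_add,
          ENNReal.one_le_ofReal, one_le_exp_iff]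
        nlinarith [mem_Ici.1 hx]
      · simp [indicator_of_notMem hx]
    _ = ENNReal.ofReal (exp (-(θ * L))) * emgf μ θ := lintegral_const_mul _ (by fun_prop)

lemma emgf_convex_combination_le {t : ℝ} (ht₀ : 0 ≤ t) (ht₁ : t ≤ 1) (θ₀ θ₁ : ℝ) :
    emgf μ (t * θ₀ + (1 - t) * θ₁) ≤ emgf μ θ₀ ^ t * emgf μ θ₁ ^ (1 - t) := by
  calc emgf μ (t * θ₀ + (1 - t) * θ₁)
      = ∫⁻ x, ENNReal.ofReal (exp (θ₀ * x)) ^ t * ENNReal.ofReal (exp (θ₁ * x)) ^ (1 - t) ∂μ := by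
        refine lintegral_congr fun x => ?_
        rw [ofReal_exp_rpow, ofReal_exp_rpow, ← ENNReal.ofReal_mul (exp_pos _).le, ← exp_add]
        ring_nf
    _ ≤ emgf μ θ₀ ^ t * emgf μ θ₁ ^ (1 - t) :=
        ENNReal.lintegral_mul_norm_pow_le (by fun_prop) (by fun_prop) ht₀ (by linarith) (by ring)

lemma ofReal_exp_lt_emgf {θ₀ θ₁ θ₂ : ℝ} (h₀ : emgf μ θ₀ < ENNReal.ofReal (exp θ₀))
    (h₁ : emgf μ θ₁ = ENNReal.ofReal (exp θ₁)) (h₀₁ : θ₀ < θ₁) (h₁₂ : θ₁ < θ₂) :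
    ENNReal.ofReal (exp θ₂) < emgf μ θ₂ := by
  by_contra! h₂
  set t := (θ₂ - θ₁) / (θ₂ - θ₀)
  have ht₀ : 0 < t := div_pos (by linarith) (by linarith)
  have ht₁ : t < 1 := (div_lt_one (by linarith)).2 (by linarith)
  have hθ₁ : t * θ₀ + (1 - t) * θ₂ = θ₁ := by
    have : θ₂ - θ₀ ≠ 0 := by linarith
    simp only [t]; field_simp; ring
  have hpos : ENNReal.ofReal (exp θ₂) ^ (1 - t) ≠ 0 := by
    rw [ofReal_exp_rpow]; exact (ENNReal.ofReal_pos.2 (exp_pos _)).ne'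
  have hfin : ENNReal.ofReal (exp θ₂) ^ (1 - t) ≠ ⊤ := by
    rw [ofReal_exp_rpow]; exact ENNReal.ofReal_ne_top
  refine (lt_irrefl (ENNReal.ofReal (exp θ₁))) ?_
  calc ENNReal.ofReal (exp θ₁) = emgf μ (t * θ₀ + (1 - t) * θ₂) := by rw [hθ₁, h₁]
    _ ≤ emgf μ θ₀ ^ t * emgf μ θ₂ ^ (1 - t) := emgf_convex_combination_le ht₀.le ht₁.le θ₀ θ₂
    _ ≤ emgf μ θ₀ ^ t * ENNReal.ofReal (exp θ₂) ^ (1 - t) := by gcongr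
    _ < ENNReal.ofReal (exp θ₀) ^ t * ENNReal.ofReal (exp θ₂) ^ (1 - t) :=
        (ENNReal.mul_lt_mul_iff_left hpos hfin).2 (ENNReal.rpow_lt_rpow h₀ ht₀)
    _ = ENNReal.ofReal (exp θ₁) := by
        rw [ofReal_exp_rpow, ofReal_exp_rpow, ← ENNReal.ofReal_mul (exp_pos _).le, ← exp_add, ← hθ₁]
        ring_nf

lemma emgf_le_of_measure_Ici_le {κ : Measure ℝ} [IsProbabilityMeasure κ] {θ β : ℝ} (hθ : 0 ≤ θ)
    (htail : ∀ L ≥ 1, κ (Ici L) ≤ ENNReal.ofReal (exp (-(β * L)))) :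
    emgf κ θ ≤ ENNReal.ofReal (exp θ) +
      ENNReal.ofReal (exp (2 * θ - β)) * (1 - ENNReal.ofReal (exp (θ - β)))⁻¹ := by
  -- `exp (θ x) ≤ exp θ` for `x < 1` and `exp (θ x) ≤ exp (θ (k + 2))` for `x ∈ [k + 1, k + 2)`.
  have hshell : ∀ x : ℝ, ENNReal.ofReal (exp (θ * x)) ≤ ENNReal.ofReal (exp θ) +
      ∑' k : ℕ, (Ici ((k : ℝ) + 1)).indicator (fun _ => ENNReal.ofReal (exp (θ * (k + 2)))) x := by
    intro x
    rcases lt_or_ge x 1 with hx | hx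
    · refine le_add_right (ENNReal.ofReal_le_ofReal (exp_le_exp.2 ?_))
      nlinarith
    · set k := ⌊x - 1⌋₊
      have hk : (k : ℝ) + 1 ≤ x := by linarith [Nat.floor_le (by linarith : 0 ≤ x - 1)]
      refine le_add_left (le_trans ?_ (ENNReal.le_tsum k))
      rw [indicator_of_mem (mem_Ici.2 hk)]
      refine ENNReal.ofReal_le_ofReal (exp_le_exp.2 ?_)
      nlinarith [Nat.lt_floor_add_one (x - 1)]
  have hterm : ∀ k : ℕ, ENNReal.ofReal (exp (θ * (k + 2))) * κ (Ici ((k : ℝ) + 1)) ≤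
      ENNReal.ofReal (exp (2 * θ - β)) * ENNReal.ofReal (exp (θ - β)) ^ k := by
    intro k
    calc ENNReal.ofReal (exp (θ * (k + 2))) * κ (Ici ((k : ℝ) + 1))
        ≤ ENNReal.ofReal (exp (θ * (k + 2))) * ENNReal.ofReal (exp (-(β * (k + 1)))) := by
          gcongr; exact htail _ (by linarith [k.cast_nonneg (α := ℝ)])
      _ = ENNReal.ofReal (exp (2 * θ - β)) * ENNReal.ofReal (exp (θ - β)) ^ k := by
          rw [← ENNReal.ofReal_pow (exp_pos _).le, ← exp_nat_mul,
            ← ENNReal.ofReal_mul (exp_pos _).le, ← ENNReal.ofReal_mul (exp_pos _).le, ← exp_add,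
            ← exp_add]
          ring_nf
  calc emgf κ θ
      ≤ ∫⁻ x, (ENNReal.ofReal (exp θ) + ∑' k : ℕ,
          (Ici ((k : ℝ) + 1)).indicator (fun _ => ENNReal.ofReal (exp (θ * (k + 2)))) x) ∂κ :=
        lintegral_mono hshell
    _ = ENNReal.ofReal (exp θ) +
          ∑' k : ℕ, ENNReal.ofReal (exp (θ * (k + 2))) * κ (Ici ((k : ℝ) + 1)) := by
        rw [lintegral_add_left measurable_const, lintegral_const, measure_univ, mul_one,
          lintegral_tsum fun k => (measurable_const.indicator measurableSet_Ici).aemeasurable]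
        simp_rw [lintegral_indicator measurableSet_Ici, setLIntegral_const]
    _ ≤ ENNReal.ofReal (exp θ) +
          ∑' k : ℕ, ENNReal.ofReal (exp (2 * θ - β)) * ENNReal.ofReal (exp (θ - β)) ^ k :=
        add_le_add_right (ENNReal.tsum_le_tsum hterm) _
    _ = _ := by rw [ENNReal.tsum_mul_left, ENNReal.tsum_geometric]

lemma lintegral_exp_shift (θ L : ℝ) :
    ∫⁻ a, ENNReal.ofReal (exp (-(θ * (L + 1 - a)))) ∂μ =
      ENNReal.ofReal (exp (-θ)) * emgf μ θ * ENNReal.ofReal (exp (-(θ * L))) := by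
  have hexp : ∀ a : ℝ, ENNReal.ofReal (exp (-(θ * (L + 1 - a)))) = ENNReal.ofReal (exp (-(θ * L))) *
      ENNReal.ofReal (exp (-θ)) * ENNReal.ofReal (exp (θ * a)) := by
    intro a
    rw [← ENNReal.ofReal_mul (exp_pos _).le, ← ENNReal.ofReal_mul (by positivity), ← exp_add,
      ← exp_add]
    ring_nf
  simp_rw [hexp]
  rw [lintegral_const_mul _ (by fun_prop), emgf]
  ring

end MGF

section UpperBound

variable {μ ν : Measure ℝ} [IsProbabilityMeasure μ] [IsProbabilityMeasure ν]

lemma le_add_geometric_of_le_add_lintegral {G : ℝ → ℝ≥0∞} {θ : ℝ} {ρ A B k : ℝ≥0∞} (hρ : ρ < 1)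
    (hshift : ∀ L, ∫⁻ a, ENNReal.ofReal (exp (-(θ * (L + 1 - a)))) ∂μ =
      ρ * ENNReal.ofReal (exp (-(θ * L))))
    (hrec : ∀ L, G L ≤ A * ENNReal.ofReal (exp (-(θ * L))) + ∫⁻ a, G (L + 1 - a) ∂μ)
    (hB : B ≠ ⊤) (hinit : ∀ L, G L ≤ k + B * ENNReal.ofReal (exp (-(θ * L)))) (L : ℝ) :
    G L ≤ k + A * (1 - ρ)⁻¹ * ENNReal.ofReal (exp (-(θ * L))) := by
  have hgeom : (1 - ρ)⁻¹ = 1 + ρ * (1 - ρ)⁻¹ :=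
    calc (1 - ρ)⁻¹ = ∑' n, ρ ^ n := (ENNReal.tsum_geometric ρ).symm
      _ = ρ ^ 0 + ∑' n, ρ ^ (n + 1) := tsum_eq_zero_add' ENNReal.summable
      _ = 1 + ρ * (1 - ρ)⁻¹ := by rw [pow_zero, ENNReal.tsum_geometric_add_one]
  have hiter : ∀ n : ℕ, ∀ L,
      G L ≤ k + (A * (1 - ρ)⁻¹ + ρ ^ n * B) * ENNReal.ofReal (exp (-(θ * L))) := by
    intro n
    induction n with
    | zero => exact fun L => (hinit L).trans (by rw [pow_zero, one_mul]; gcongr; exact le_add_self)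
    | succ n ih =>
      intro L
      calc G L ≤ A * ENNReal.ofReal (exp (-(θ * L))) + ∫⁻ a, G (L + 1 - a) ∂μ := hrec L
        _ ≤ A * ENNReal.ofReal (exp (-(θ * L))) + ∫⁻ a, (k + (A * (1 - ρ)⁻¹ + ρ ^ n * B) *
              ENNReal.ofReal (exp (-(θ * (L + 1 - a))))) ∂μ := by
            gcongr with a; exact ih _
        _ = k + (A * (1 + ρ * (1 - ρ)⁻¹) + ρ ^ (n + 1) * B) * ENNReal.ofReal (exp (-(θ * L))) := by
            rw [lintegral_add_left measurable_const, lintegral_const_mul _ (by fun_prop), hshift,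
              lintegral_const, measure_univ, mul_one]
            ring
        _ = k + (A * (1 - ρ)⁻¹ + ρ ^ (n + 1) * B) * ENNReal.ofReal (exp (-(θ * L))) := by
            rw [← hgeom]
  have hlim : Tendsto
      (fun n : ℕ => k + (A * (1 - ρ)⁻¹ + ρ ^ n * B) * ENNReal.ofReal (exp (-(θ * L)))) atTop
      (𝓝 (k + (A * (1 - ρ)⁻¹ + 0 * B) * ENNReal.ofReal (exp (-(θ * L))))) := by
    refine tendsto_const_nhds.add (ENNReal.Tendsto.mul_const ?_ (Or.inr ENNReal.ofReal_ne_top))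
    exact tendsto_const_nhds.add (ENNReal.Tendsto.mul_const
      (ENNReal.tendsto_pow_atTop_nhds_zero_of_lt_one hρ) (Or.inr hB))
  simpa using ge_of_tendsto' hlim fun n => hiter n L

lemma stationary_tail_le (hstat : ν = Measure.map step (ν.prod μ)) {θ : ℝ} (hθ : 0 < θ)
    (hmgf : emgf μ θ < ENNReal.ofReal (exp θ)) :
    ∃ C, ∀ L, (ν (Ici L)).toReal ≤ C * exp (-(θ * L)) := by
  set ρ := ENNReal.ofReal (exp (-θ)) * emgf μ θ
  have hρ : ρ < 1 :=
    calc ρ < ENNReal.ofReal (exp (-θ)) * ENNReal.ofReal (exp θ) :=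
          ENNReal.mul_lt_mul_right (ENNReal.ofReal_pos.2 (exp_pos _)).ne' ENNReal.ofReal_ne_top hmgf
      _ = 1 := by rw [← ENNReal.ofReal_mul (exp_pos _).le, ← exp_add, neg_add_cancel, exp_zero,
          ENNReal.ofReal_one]
  have hrec : ∀ L, ν (Ici L) ≤
      emgf μ θ * ENNReal.ofReal (exp (-(θ * L))) + ∫⁻ a, ν (Ici (L + 1 - a)) ∂μ := fun L =>
    (measure_Ici_le hstat L).trans (by rw [mul_comm]; gcongr; exact measure_Ici_le_emgf hθ.le L)
  have hinit : ∀ c L, ν (Ici L) ≤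
      ν (Ici c) + ENNReal.ofReal (exp (θ * c)) * ENNReal.ofReal (exp (-(θ * L))) := by
    intro c L
    rcases le_or_gt c L with hcL | hLc
    · exact le_add_right (measure_mono (Ici_subset_Ici.2 hcL))
    · refine le_add_left (prob_le_one.trans ?_)
      rw [← ENNReal.ofReal_mul (exp_pos _).le, ← exp_add, ENNReal.one_le_ofReal, one_le_exp_iff]
      nlinarith
  have hbound : ∀ c L, ν (Ici L) ≤
      ν (Ici c) + emgf μ θ * (1 - ρ)⁻¹ * ENNReal.ofReal (exp (-(θ * L))) := fun c =>
    le_add_geometric_of_le_add_lintegral hρ (lintegral_exp_shift θ) hrec ENNReal.ofReal_ne_top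
      (hinit c)
  have hfin : emgf μ θ * (1 - ρ)⁻¹ ≠ ⊤ :=
    ENNReal.mul_ne_top (hmgf.trans ENNReal.ofReal_lt_top).ne
      (ENNReal.inv_ne_top.2 (tsub_pos_of_lt hρ).ne')
  refine ⟨(emgf μ θ * (1 - ρ)⁻¹).toReal,
    fun L => ENNReal.toReal_le_of_le_ofReal (by positivity) ?_⟩
  rw [ENNReal.ofReal_mul ENNReal.toReal_nonneg, ENNReal.ofReal_toReal hfin]
  have hlim := (tendsto_measure_Ici_atTop ν).add_const
    (emgf μ θ * (1 - ρ)⁻¹ * ENNReal.ofReal (exp (-(θ * L))))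
  simpa using ge_of_tendsto' hlim fun c => hbound c L

end UpperBound

/-- The law of `∑ i < n, (a i - 1)` for i.i.d. `a i ∼ μ`. -/
def walk (μ : Measure ℝ) : ℕ → Measure ℝ
  | 0 => Measure.dirac 0
  | n + 1 => Measure.map (fun p : ℝ × ℝ => p.1 + p.2 - 1) ((walk μ n).prod μ)

section Walk

variable {μ : Measure ℝ} [IsProbabilityMeasure μ]

instance isProbabilityMeasure_walk : ∀ n, IsProbabilityMeasure (walk μ n)
  | 0 => by rw [walk]; infer_instance
  | n + 1 => by
    have := isProbabilityMeasure_walk n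
    rw [walk]
    exact Measure.isProbabilityMeasure_map (by fun_prop)

omit [IsProbabilityMeasure μ] in
lemma walk_zero_Ici (L : ℝ) : walk μ 0 (Ici L) = if L ≤ 0 then 1 else 0 := by
  rw [walk, Measure.dirac_apply' _ measurableSet_Ici]
  by_cases h : L ≤ 0 <;> simp [h]

lemma walk_succ_Ici (n : ℕ) (L : ℝ) :
    walk μ (n + 1) (Ici L) = ∫⁻ a, walk μ n (Ici (L + 1 - a)) ∂μ := by
  rw [walk, Measure.map_apply (by fun_prop) measurableSet_Ici,
    Measure.prod_apply_symm (measurableSet_Ici.preimage (by fun_prop))]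
  congr! 3 with a
  ext t
  simp only [mem_preimage, mem_Ici]
  constructor <;> intro <;> linarith

lemma emgf_walk (θ : ℝ) (n : ℕ) :
    emgf (walk μ n) θ = (ENNReal.ofReal (exp (-θ)) * emgf μ θ) ^ n := by
  induction n with
  | zero => simp [emgf, walk]
  | succ n ih =>
    have hexp : ∀ t a : ℝ, ENNReal.ofReal (exp (θ * (t + a - 1))) = ENNReal.ofReal (exp (θ * t)) *
        (ENNReal.ofReal (exp (-θ)) * ENNReal.ofReal (exp (θ * a))) := by
      intro t a
      rw [← ENNReal.ofReal_mul (by positivity), ← ENNReal.ofReal_mul (by positivity),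
        ← exp_add, ← exp_add]
      ring_nf
    rw [emgf, walk, lintegral_map (by fun_prop) (by fun_prop), lintegral_prod _ (by fun_prop)]
    dsimp only
    simp only [hexp, lintegral_const_mul', ENNReal.ofReal_ne_top, ne_eq, not_false_eq_true]
    rw [lintegral_mul_const _ (by fun_prop), pow_succ, ← ih]
    rfl

lemma walk_Ici_mul_le (n m : ℕ) (A B : ℝ) :
    walk μ n (Ici A) * walk μ m (Ici B) ≤ walk μ (n + m) (Ici (A + B)) := by
  induction m generalizing B with
  | zero =>
    rw [walk_zero_Ici]
    split_ifs with hB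
    · simpa using measure_mono (Ici_subset_Ici.2 (by linarith))
    · simp
  | succ m ih =>
    rw [← add_assoc, walk_succ_Ici, walk_succ_Ici, ← lintegral_const_mul' _ _ (measure_ne_top _ _)]
    refine lintegral_mono fun a => ?_
    simpa only [add_sub_assoc', add_assoc] using ih (B + 1 - a)

lemma walk_Ici_pow_le (n k : ℕ) (L : ℝ) :
    walk μ n (Ici L) ^ k ≤ walk μ (k * n) (Ici (k * L)) := by
  induction k with
  | zero => simp [walk_zero_Ici]
  | succ k ih =>
    calc walk μ n (Ici L) ^ (k + 1) ≤ walk μ (k * n) (Ici (k * L)) * walk μ n (Ici L) := by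
          rw [pow_succ]; gcongr
      _ ≤ walk μ (k * n + n) (Ici (k * L + L)) := walk_Ici_mul_le _ _ _ _
      _ = walk μ ((k + 1) * n) (Ici ((k + 1 : ℕ) * L)) := by push_cast; ring_nf

lemma walk_Ici_le_stationary {ν : Measure ℝ} [IsProbabilityMeasure ν] (hnn : μ {x | x < 0} = 0)
    (hstat : ν = Measure.map step (ν.prod μ)) (n : ℕ) (L : ℝ) : walk μ n (Ici L) ≤ ν (Ici L) := by
  induction n generalizing L with
  | zero =>
    rw [walk_zero_Ici]
    split_ifs with hL
    · exact (measure_Ici_of_nonpos hnn hstat hL).ge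
    · exact zero_le
  | succ n ih =>
    rw [walk_succ_Ici]
    exact (lintegral_mono fun a => ih _).trans (lintegral_measure_Ici_le hstat L)

end Walk

section LowerBound

variable {μ : Measure ℝ} [IsProbabilityMeasure μ]

lemma exists_walk_Ici_ge {θ₀ θ₁ β : ℝ} (hθ₀ : 0 ≤ θ₀) (h₀ : emgf μ θ₀ < ENNReal.ofReal (exp θ₀))
    (h₁ : emgf μ θ₁ = ENNReal.ofReal (exp θ₁)) (h₀₁ : θ₀ < θ₁) (hβ : θ₁ < β) :
    ∃ L ≥ 1, ∃ n, ENNReal.ofReal (exp (-(β * L))) ≤ walk μ n (Ici L) := by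
  by_contra! htail
  obtain ⟨θ, hθ₁, hθβ⟩ := exists_between hβ
  set C := ENNReal.ofReal (exp θ) +
    ENNReal.ofReal (exp (2 * θ - β)) * (1 - ENNReal.ofReal (exp (θ - β)))⁻¹
  have hC : C ≠ ⊤ := by
    refine ENNReal.add_ne_top.2 ⟨ENNReal.ofReal_ne_top, ENNReal.mul_ne_top ENNReal.ofReal_ne_top
      (ENNReal.inv_ne_top.2 (tsub_pos_of_lt ?_).ne')⟩
    rw [ENNReal.ofReal_lt_one, exp_lt_one_iff]
    linarith
  have hpow : ∀ n : ℕ, (ENNReal.ofReal (exp (-θ)) * emgf μ θ) ^ n ≤ C := fun n => by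
    rw [← emgf_walk]
    exact emgf_le_of_measure_Ici_le (by linarith) fun L hL => (htail L hL n).le
  have hle : emgf μ θ ≤ ENNReal.ofReal (exp θ) :=
    calc emgf μ θ = ENNReal.ofReal (exp θ) * (ENNReal.ofReal (exp (-θ)) * emgf μ θ) := by
          rw [← mul_assoc, ← ENNReal.ofReal_mul (exp_pos _).le, ← exp_add, add_neg_cancel, exp_zero,
            ENNReal.ofReal_one, one_mul]
      _ ≤ ENNReal.ofReal (exp θ) := mul_le_of_le_one_right' (le_one_of_forall_pow_le hC hpow)
  exact (ofReal_exp_lt_emgf h₀ h₁ h₀₁ (by linarith)).not_ge hle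

lemma stationary_tail_ge {ν : Measure ℝ} [IsProbabilityMeasure ν] (hnn : μ {x | x < 0} = 0)
    (hstat : ν = Measure.map step (ν.prod μ)) {θ₀ θ₁ β : ℝ} (hθ₀ : 0 ≤ θ₀)
    (h₀ : emgf μ θ₀ < ENNReal.ofReal (exp θ₀)) (h₁ : emgf μ θ₁ = ENNReal.ofReal (exp θ₁))
    (h₀₁ : θ₀ < θ₁) (hβ : θ₁ < β) :
    ∃ c > 0, ∀ L ≥ 0, c * exp (-(β * L)) ≤ (ν (Ici L)).toReal := by
  obtain ⟨L₀, hL₀, n, hn⟩ := exists_walk_Ici_ge hθ₀ h₀ h₁ h₀₁ hβ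
  have hL₀pos : 0 < L₀ := by linarith
  refine ⟨exp (-(β * L₀)), exp_pos _, fun L hL => ?_⟩
  set k := ⌈L / L₀⌉₊
  have hkL : L ≤ k * L₀ := (div_le_iff₀ hL₀pos).1 (Nat.le_ceil _)
  have hk : k * L₀ ≤ L + L₀ := by
    have := Nat.ceil_lt_add_one (div_nonneg hL hL₀pos.le)
    rw [div_add_one hL₀pos.ne', lt_div_iff₀ hL₀pos] at this
    exact this.le
  rw [← ENNReal.ofReal_le_iff_le_toReal (measure_ne_top _ _)]
  calc ENNReal.ofReal (exp (-(β * L₀)) * exp (-(β * L)))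
        ≤ ENNReal.ofReal (exp (-(β * L₀))) ^ k := by
        rw [← ENNReal.ofReal_pow (exp_pos _).le, ← exp_nat_mul, ← exp_add]
        exact ENNReal.ofReal_le_ofReal (exp_le_exp.2 (by nlinarith))
    _ ≤ walk μ n (Ici L₀) ^ k := by gcongr
    _ ≤ walk μ (k * n) (Ici (k * L₀)) := walk_Ici_pow_le n k L₀
    _ ≤ ν (Ici (k * L₀)) := walk_Ici_le_stationary hnn hstat _ _
    _ ≤ ν (Ici L) := measure_mono (Ici_subset_Ici.2 hkL)

end LowerBound

lemma tendsto_log_div_of_exp_bounds {G : ℝ → ℝ} {θs : ℝ}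
    (hup : ∀ᶠ θ in 𝓝[<] θs, ∃ C, ∀ᶠ L in atTop, G L ≤ C * exp (-(θ * L)))
    (hlow : ∀ β > θs, ∃ c > 0, ∀ᶠ L in atTop, c * exp (-(β * L)) ≤ G L) :
    Tendsto (fun L => 1 / L * log (G L)) atTop (𝓝 (-θs)) := by
  have hdecay : ∀ C θ : ℝ, Tendsto (fun L : ℝ => -θ + log C / L) atTop (𝓝 (-θ)) := fun C θ => by
    simpa using (tendsto_const_nhds (x := -θ)).add
      ((tendsto_const_nhds (x := log C)).div_atTop tendsto_id)
  have hlog : ∀ {C θ L : ℝ}, 0 < C → 0 < L → 1 / L * log (C * exp (-(θ * L))) = -θ + log C / L := by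
    intro C θ L hC hL
    rw [log_mul hC.ne' (exp_pos _).ne', log_exp]
    field_simp
    ring
  refine tendsto_order.2 ⟨fun b hb => ?_, fun b hb => ?_⟩
  · set β := (θs - b) / 2
    obtain ⟨c, hc, h⟩ := hlow β (by simp only [β]; linarith)
    filter_upwards [h, eventually_gt_atTop 0,
      (hdecay c β).eventually (lt_mem_nhds (show b < -β by simp only [β]; linarith))]
      with L hL hL0 hb'
    calc b < -β + log c / L := hb'
      _ = 1 / L * log (c * exp (-(β * L))) := (hlog hc hL0).symm
      _ ≤ 1 / L * log (G L) := by gcongr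
  · obtain ⟨c, hc, hpos⟩ := hlow (θs + 1) (by linarith)
    obtain ⟨θ, ⟨C, hC⟩, hθ⟩ := (hup.and (Ioo_mem_nhdsLT (show -b < θs by linarith))).exists
    filter_upwards [hC, hpos, eventually_gt_atTop 0,
      (hdecay C θ).eventually (gt_mem_nhds (show -θ < b by linarith [hθ.1]))]
      with L hL hGpos hL0 hb'
    have hG : 0 < G L := lt_of_lt_of_le (by positivity) hGpos
    have hC0 : 0 < C := pos_of_mul_pos_left (hG.trans_le hL) (exp_pos _).le
    calc 1 / L * log (G L) ≤ 1 / L * log (C * exp (-(θ * L))) := by gcongr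
      _ = -θ + log C / L := hlog hC0 hL0
      _ < b := hb'

end Lindley

end

open Lindley

theorem stmt16_general (μa ν : Measure ℝ) [IsProbabilityMeasure μa] [IsProbabilityMeasure ν]
    (hnn : μa {x | x < 0} = 0)
    (hstat : ν = Measure.map (fun p : ℝ × ℝ => max (p.1 - 1) 0 + p.2) (ν.prod μa))
    (θstar : ℝ) (hθpos : 0 < θstar)
    (hInt : Integrable (fun x => Real.exp (θstar * x)) μa)
    (heq : Real.log (∫ x, Real.exp (θstar * x) ∂μa) = θstar)
    (hlt : ∀ θ ∈ Set.Ioo (0 : ℝ) θstar,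
      Real.log (∫ x, Real.exp (θ * x) ∂μa) < θ) :
    Filter.Tendsto (fun Lv : ℝ => (1 / Lv) * Real.log (ν (Set.Ici Lv)).toReal)
      Filter.atTop (nhds (-θstar)) := by
  have hmgf_lt : ∀ θ ∈ Ioo 0 θstar, emgf μa θ < ENNReal.ofReal (exp θ) := by
    intro θ hθ
    have hi := ProbabilityTheory.integrable_exp_mul_of_le_of_le (X := fun x => x) (by simp) hInt
      hθ.1.le hθ.2.le
    rw [emgf_eq_ofReal_integral hi, ENNReal.ofReal_lt_ofReal_iff (exp_pos _)]
    exact (log_lt_iff_lt_exp (integral_exp_pos hi)).1 (hlt θ hθ)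
  have hmgf_eq : emgf μa θstar = ENNReal.ofReal (exp θstar) := by
    rw [emgf_eq_ofReal_integral hInt, ← exp_log (integral_exp_pos hInt), heq]
  refine tendsto_log_div_of_exp_bounds ?_ fun β hβ => ?_
  · filter_upwards [Ioo_mem_nhdsLT hθpos] with θ hθ
    obtain ⟨C, hC⟩ := stationary_tail_le hstat hθ.1 (hmgf_lt θ hθ)
    exact ⟨C, Eventually.of_forall hC⟩
  · obtain ⟨c, hc, hlow⟩ := stationary_tail_ge hnn hstat (half_pos hθpos).le
      (hmgf_lt _ ⟨half_pos hθpos, half_lt_self hθpos⟩) hmgf_eq (half_lt_self hθpos) hβ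
    exact ⟨c, hc, (eventually_ge_atTop 0).mono hlow⟩

theorem stmt16 (μa ν : Measure ℝ) [IsProbabilityMeasure μa] [IsProbabilityMeasure ν]
    (hnn : μa {x | x < 0} = 0)
    (hmean : ∫ x, x ∂μa < 1)
    (hmgf : ∃ ε > 0, ∀ θ : ℝ, |θ| < ε → Integrable (fun x => Real.exp (θ * x)) μa)
    (hstat : ν = Measure.map (fun p : ℝ × ℝ => max (p.1 - 1) 0 + p.2) (ν.prod μa))
    (θstar : ℝ) (hθpos : 0 < θstar)
    (hInt : Integrable (fun x => Real.exp (θstar * x)) μa)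
    (heq : Real.log (∫ x, Real.exp (θstar * x) ∂μa) = θstar)
    (hlt : ∀ θ ∈ Set.Ioo (0 : ℝ) θstar,
      Real.log (∫ x, Real.exp (θ * x) ∂μa) < θ) :
    Filter.Tendsto (fun Lv : ℝ => (1 / Lv) * Real.log (ν (Set.Ici Lv)).toReal)
      Filter.atTop (nhds (-θstar)) :=
  stmt16_general μa ν hnn hstat θstar hθpos hInt heq hlt
end

section
/- Let S be the set of n×n 0-1 matrices σ with row sums and column sums at most 1 (partial permutation matrices). Then the convex hull of S equals { x ∈ [0,1]^{n×n} : Σ_m x_{k,m} ≤ 1 for all rows k, and Σ_m x_{m,ℓ} ≤ 1 for all columns ℓ }. -/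
/-! Convex combinations preserve the defining inequalities, which gives one inclusion. Conversely, a
doubly substochastic `x` is the top-left block of the doubly stochastic matrix
`[[x, diag (1 - row sums)], [diag (1 - column sums), xᵀ]]`. By Birkhoff's theorem this dilation is a
convex combination of permutation matrices; taking top-left blocks is linear, so `x` is a convex
combination of top-left blocks of permutation matrices, and these are partial permutation matrices. -/

open Finset Matrix

def doublySubstochastic (ι : Type*) [Fintype ι] : Set (ι → ι → ℝ) :=
  {x | (∀ k l, 0 ≤ x k l ∧ x k l ≤ 1) ∧ (∀ k, ∑ l, x k l ≤ 1) ∧ (∀ l, ∑ k, x k l ≤ 1)}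

def partialPermMatrices (ι : Type*) [Fintype ι] : Set (ι → ι → ℝ) :=
  {σ | (∀ k l, σ k l = 0 ∨ σ k l = 1) ∧ (∀ k, ∑ l, σ k l ≤ 1) ∧ (∀ l, ∑ k, σ k l ≤ 1)}

theorem Matrix.isLinearMap_toBlocks₁₁ {R α l m n o : Type*} [Semiring R] [AddCommMonoid α]
    [Module R α] : IsLinearMap R (toBlocks₁₁ : Matrix (n ⊕ o) (l ⊕ m) α → Matrix n l α) :=
  ⟨fun _ _ => rfl, fun _ _ => rfl⟩

section

variable {ι κ : Type*} [Fintype ι]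

theorem convex_doublySubstochastic : Convex ℝ (doublySubstochastic ι) := by
  rintro x ⟨hx, hxr, hxc⟩ y ⟨hy, hyr, hyc⟩ a b ha hb hab
  have hcomb : ∀ s t : ℝ, s ≤ 1 → t ≤ 1 → a * s + b * t ≤ 1 := fun s t hs ht => by nlinarith
  refine ⟨fun k l => ⟨?_, ?_⟩, fun k => ?_, fun l => ?_⟩
  · simpa using add_nonneg (mul_nonneg ha (hx k l).1) (mul_nonneg hb (hy k l).1)
  · simpa using hcomb _ _ (hx k l).2 (hy k l).2
  · simpa [sum_add_distrib, ← mul_sum] using hcomb _ _ (hxr k) (hyr k)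
  · simpa [sum_add_distrib, ← mul_sum] using hcomb _ _ (hxc l) (hyc l)

theorem partialPermMatrices_subset_doublySubstochastic :
    partialPermMatrices ι ⊆ doublySubstochastic ι := by
  rintro σ ⟨h01, hr, hc⟩
  exact ⟨fun k l => by rcases h01 k l with h | h <;> simp [h], hr, hc⟩

variable [DecidableEq ι]

theorem sum_row_toBlocks₁₁_le_one_of_mem_doublyStochastic [Fintype κ] [DecidableEq κ]
    {M : Matrix (ι ⊕ κ) (ι ⊕ κ) ℝ} (hM : M ∈ doublyStochastic ℝ (ι ⊕ κ)) (k : ι) :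
    ∑ l, M.toBlocks₁₁ k l ≤ 1 := by
  have hrow := sum_row_of_mem_doublyStochastic hM (Sum.inl k)
  rw [Fintype.sum_sum_type] at hrow
  have hright : 0 ≤ ∑ l, M (Sum.inl k) (Sum.inr l) :=
    sum_nonneg fun l _ => nonneg_of_mem_doublyStochastic hM
  simp only [toBlocks₁₁, of_apply]
  linarith

theorem toBlocks₁₁_permMatrix_mem_partialPermMatrices [Fintype κ] [DecidableEq κ]
    (σ : Equiv.Perm (ι ⊕ κ)) : (σ.permMatrix ℝ).toBlocks₁₁ ∈ partialPermMatrices ι := by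
  have hσ : σ.permMatrix ℝ ∈ doublyStochastic ℝ (ι ⊕ κ) := permMatrix_mem_doublyStochastic
  refine ⟨fun k l => ?_, sum_row_toBlocks₁₁_le_one_of_mem_doublyStochastic hσ, fun l => ?_⟩
  · simp only [toBlocks₁₁, of_apply, Equiv.Perm.permMatrix, PEquiv.toMatrix_apply]
    split_ifs <;> simp
  · simpa [toBlocks₁₁] using sum_row_toBlocks₁₁_le_one_of_mem_doublyStochastic
      (transpose_mem_doublyStochastic_iff.2 hσ) l

def doublyStochasticDilation (x : Matrix ι ι ℝ) : Matrix (ι ⊕ ι) (ι ⊕ ι) ℝ :=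
  fromBlocks x (diagonal fun k => 1 - ∑ l, x k l) (diagonal fun l => 1 - ∑ k, x k l) xᵀ

theorem doublyStochasticDilation_mem_doublyStochastic {x : Matrix ι ι ℝ}
    (hx : ∀ k l, 0 ≤ x k l) (hr : ∀ k, ∑ l, x k l ≤ 1) (hc : ∀ l, ∑ k, x k l ≤ 1) :
    doublyStochasticDilation x ∈ doublyStochastic ℝ (ι ⊕ ι) := by
  refine mem_doublyStochastic_iff_sum.2 ⟨?_, ?_, ?_⟩
  · rintro (k | k) (l | l) <;> simp [doublyStochasticDilation, diagonal_apply, hx] <;>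
      split_ifs <;> simp [hr, hc]
  · rintro (k | k) <;> simp [doublyStochasticDilation, Fintype.sum_sum_type, diagonal_apply]
  · rintro (l | l) <;> simp [doublyStochasticDilation, Fintype.sum_sum_type, diagonal_apply]

theorem doublySubstochastic_subset_convexHull_partialPermMatrices :
    doublySubstochastic ι ⊆ convexHull ℝ (partialPermMatrices ι) := by
  rintro x ⟨hx, hr, hc⟩
  have hdil := doublyStochasticDilation_mem_doublyStochastic (fun k l => (hx k l).1) hr hc
  rw [← SetLike.mem_coe, doublyStochastic_eq_convexHull_permMatrix] at hdil
  have hblock := Set.mem_image_of_mem toBlocks₁₁ hdil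
  simp only [isLinearMap_toBlocks₁₁.image_convexHull, doublyStochasticDilation] at hblock
  refine convexHull_mono ?_ hblock
  rintro _ ⟨_, ⟨σ, rfl⟩, rfl⟩
  exact toBlocks₁₁_permMatrix_mem_partialPermMatrices σ

end

theorem stmt19 (n : ℕ) :
    convexHull ℝ {σ : Fin n → Fin n → ℝ | (∀ k l, σ k l = 0 ∨ σ k l = 1) ∧
        (∀ k, ∑ l, σ k l ≤ 1) ∧ (∀ l, ∑ k, σ k l ≤ 1)}
      = {x : Fin n → Fin n → ℝ | (∀ k l, 0 ≤ x k l ∧ x k l ≤ 1) ∧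
        (∀ k, ∑ l, x k l ≤ 1) ∧ (∀ l, ∑ k, x k l ≤ 1)} :=
  (convexHull_min partialPermMatrices_subset_doublySubstochastic
    convex_doublySubstochastic).antisymm doublySubstochastic_subset_convexHull_partialPermMatrices
end
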